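/- Let G be a finite directed graph with edge weights in ℤ², such that every simple cycle C of G satisfies w₁(C) ≥ 0 and w₂(C) ≥ 1, let N be the number of vertices and W a bound on the absolute values of weights. Then every infinite path ρ in G satisfies liminf_{k→∞} w₂(ρ[0,k])/k ≥ 1/N > 0. -/

import Mathlib

/-!
Removing a simple cycle from a prefix of the path shortens it by at most `N` steps and, since
every simple cycle has second weight at least `1`, lowers its second weight by at least `1`.
Any prefix longer than `N` repeats a vertex among its first `N + 1`, so it contains such a cycle;
repeating the removal leaves a prefix of length at most `N`, of weight at least `-N W`. Hence
`N · w₂(ρ[0,k]) ≥ k - N - N² W`, and dividing by `N k` gives the bound on the liminf.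
-/

open Finset Filter Topology

theorem le_liminf_div_of_linear_bounds {s : ℕ → ℝ} {c A B : ℝ} (hc : 0 < c)
    (hlow : ∀ k : ℕ, (k : ℝ) - A ≤ c * s k) (hup : ∀ k : ℕ, s k ≤ k * B) :
    1 / c ≤ atTop.liminf (fun k : ℕ => s k / k) := by
  have hg : Tendsto (fun k : ℕ => 1 / c - A / c / k) atTop (𝓝 (1 / c)) := by
    simpa using tendsto_const_nhds.sub (tendsto_const_div_atTop_nhds_zero_nat (A / c))
  have hgs : ∀ᶠ k : ℕ in atTop, 1 / c - A / c / k ≤ s k / k := by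
    filter_upwards [eventually_gt_atTop 0] with k hk
    have hk' : (0 : ℝ) < k := by exact_mod_cast hk
    rw [show 1 / c - A / c / k = (k - A) / c / k by field_simp]
    gcongr
    rw [div_le_iff₀ hc]
    linarith [hlow k]
  have hcobdd : IsCoboundedUnder (· ≥ ·) atTop (fun k : ℕ => s k / k) :=
    isCoboundedUnder_ge_of_eventually_le atTop (x := B) <| by
      filter_upwards [eventually_gt_atTop 0] with k hk
      exact (div_le_iff₀ (by exact_mod_cast hk)).mpr ((hup k).trans_eq (mul_comm _ _))
  exact hg.liminf_eq ▸ liminf_le_liminf hgs hg.isBoundedUnder_ge hcobdd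

theorem sum_range_eq_sum_range_skip {M : Type*} [AddCommMonoid M] (e : ℕ → M) (i n r : ℕ) :
    ∑ m ∈ range (i + n + r), e m =
      ∑ m ∈ range (i + r), (if m < i then e m else e (m + n)) + ∑ m ∈ range n, e (i + m) := by
  have hhead : ∑ m ∈ range i, (if m < i then e m else e (m + n)) = ∑ m ∈ range i, e m :=
    sum_congr rfl fun m hm => if_pos (mem_range.mp hm)
  have htail : ∀ m, (if i + m < i then e (i + m) else e (i + m + n)) = e (i + n + m) := fun m => by
    rw [if_neg (by omega), Nat.add_right_comm]
  simp only [sum_range_add, hhead, htail]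
  abel

section Paths

variable {V : Type*} {E : V → V → Prop} {w : V → V → ℤ} {ρ : ℕ → V}

def IsInfinitePath (E : V → V → Prop) (ρ : ℕ → V) : Prop :=
  ∀ k, E (ρ k) (ρ (k + 1))

def prefixWeight (w : V → V → ℤ) (ρ : ℕ → V) (k : ℕ) : ℤ :=
  ∑ i ∈ range k, w (ρ i) (ρ (i + 1))

/-- A simple cycle of length `n` is encoded as `c 0, …, c n = c 0` with `c 0, …, c (n - 1)`
pairwise distinct. -/
def SimpleCyclesPositive (E : V → V → Prop) (w : V → V → ℤ) : Prop :=
  ∀ (n : ℕ) (c : ℕ → V), 1 ≤ n → c n = c 0 → (∀ i < n, E (c i) (c (i + 1))) →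
    (∀ i < n, ∀ j < n, c i = c j → i = j) → 1 ≤ prefixWeight w c n

theorem abs_prefixWeight_le {W : ℤ} (hW : ∀ u v, E u v → |w u v| ≤ W)
    (hρ : IsInfinitePath E ρ) (k : ℕ) : |prefixWeight w ρ k| ≤ k * W :=
  (abs_sum_le_sum_abs _ _).trans <| (sum_le_sum fun i _ => hW _ _ (hρ i)).trans_eq <| by simp

def removeSegment (ρ : ℕ → V) (i n : ℕ) : ℕ → V :=
  fun m => if m < i then ρ m else ρ (m + n)

theorem apply_removeSegment_succ {α : Type*} (F : V → V → α) {i n : ℕ}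
    (hcycle : ρ (i + n) = ρ i) (m : ℕ) :
    F (removeSegment ρ i n m) (removeSegment ρ i n (m + 1)) =
      if m < i then F (ρ m) (ρ (m + 1)) else F (ρ (m + n)) (ρ (m + n + 1)) := by
  unfold removeSegment
  rcases lt_trichotomy (m + 1) i with h | h | h
  · rw [if_pos h, if_pos (by omega), if_pos (by omega)]
  · rw [if_neg h.not_lt, if_pos (by omega), if_pos (by omega), h, hcycle]
  · rw [if_neg (by omega), if_neg (by omega), if_neg (by omega), Nat.add_right_comm]

theorem IsInfinitePath.removeSegment (hρ : IsInfinitePath E ρ) {i n : ℕ}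
    (hcycle : ρ (i + n) = ρ i) : IsInfinitePath E (removeSegment ρ i n) := fun m => by
  rw [apply_removeSegment_succ E hcycle]
  split_ifs
  exacts [hρ m, hρ (m + n)]

theorem prefixWeight_removeSegment {i n : ℕ} (hcycle : ρ (i + n) = ρ i) (r : ℕ) :
    prefixWeight w ρ (i + n + r) =
      prefixWeight w (removeSegment ρ i n) (i + r) + prefixWeight w (fun m => ρ (i + m)) n := by
  simp only [prefixWeight, apply_removeSegment_succ w hcycle]
  exact sum_range_eq_sum_range_skip (fun m => w (ρ m) (ρ (m + 1))) i n r

theorem SimpleCyclesPositive.one_le_prefixWeight (hcyc : SimpleCyclesPositive E w)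
    (hρ : IsInfinitePath E ρ) {i n : ℕ} (hn : 0 < n) (hcycle : ρ (i + n) = ρ i)
    (hinj : Set.InjOn ρ (Set.Ico i (i + n))) : 1 ≤ prefixWeight w (fun m => ρ (i + m)) n :=
  hcyc n _ hn hcycle (fun m _ => hρ (i + m)) fun x hx y hy hxy => by
    have := hinj ⟨by omega, by omega⟩ ⟨by omega, by omega⟩ hxy
    omega

theorem exists_simpleCycle_le_card [Fintype V] (ρ : ℕ → V) :
    ∃ i j, i < j ∧ j ≤ Fintype.card V ∧ ρ j = ρ i ∧ Set.InjOn ρ (Set.Ico i j) := by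
  classical
  have hrep : ∃ j ≤ Fintype.card V, ∃ i < j, ρ i = ρ j := by
    obtain ⟨a, b, hab, heq⟩ := Fintype.exists_ne_map_eq_of_card_lt
      (fun m : Fin (Fintype.card V + 1) => ρ m) (by simp)
    rcases hab.lt_or_gt with h | h
    exacts [⟨b, b.is_le, a, h, heq⟩, ⟨a, a.is_le, b, h, heq.symm⟩]
  have hex : ∃ j, ∃ i < j, ρ i = ρ j := hrep.imp fun _ => And.right
  obtain ⟨i, hij, hcycle⟩ := Nat.find_spec hex
  obtain ⟨j, hjN, hj⟩ := hrep
  refine ⟨i, Nat.find hex, hij, (Nat.find_min' hex hj).trans hjN, hcycle.symm, ?_⟩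
  -- a repetition inside `[i, j)` would be found before `Nat.find hex`
  intro x hx y hy hxy
  by_contra hne
  rcases Nat.lt_or_gt_of_ne hne with h | h
  · exact Nat.find_min hex hy.2 ⟨x, h, hxy⟩
  · exact Nat.find_min hex hx.2 ⟨y, h, hxy.symm⟩

theorem card_mul_prefixWeight_ge [Fintype V] {W : ℤ} (hW : ∀ u v, E u v → |w u v| ≤ W)
    (hcyc : SimpleCyclesPositive E w) (k : ℕ) (ρ : ℕ → V) (hρ : IsInfinitePath E ρ) :
    (k : ℤ) - Fintype.card V - Fintype.card V ^ 2 * W ≤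
      Fintype.card V * prefixWeight w ρ k := by
  induction k using Nat.strong_induction_on generalizing ρ with
  | _ k ih =>
  have hN : (0 : ℤ) ≤ Fintype.card V := Int.natCast_nonneg _
  by_cases hk : k ≤ Fintype.card V
  · have hS := abs_le.mp (abs_prefixWeight_le hW hρ k)
    have hW0 : 0 ≤ W := (abs_nonneg _).trans (hW _ _ (hρ 0))
    have hk : (k : ℤ) ≤ Fintype.card V := by exact_mod_cast hk
    nlinarith [mul_le_mul_of_nonneg_left hS.1 hN, mul_nonneg (mul_nonneg (sub_nonneg.2 hk) hN) hW0]
  · obtain ⟨i, j, hij, hjN, hcycle, hinj⟩ := exists_simpleCycle_le_card ρ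
    obtain ⟨n, rfl⟩ : ∃ n, j = i + n := ⟨j - i, by omega⟩
    obtain ⟨r, rfl⟩ : ∃ r, k = i + n + r := ⟨k - (i + n), by omega⟩
    have hC := hcyc.one_le_prefixWeight hρ (by omega) hcycle hinj
    have IH := ih (i + r) (by omega) _ (hρ.removeSegment hcycle)
    have hn : (n : ℤ) ≤ Fintype.card V := by omega
    rw [prefixWeight_removeSegment hcycle]
    push_cast at IH ⊢
    nlinarith [mul_le_mul_of_nonneg_left hC hN]

end Paths

/-- If every simple cycle `C` of a finite directed graph with `N` vertices and
2-dimensional integer weights (bounded in absolute value by `W`) satisfies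
`w₁(C) ≥ 0` and `w₂(C) ≥ 1`, then every infinite path has second-coordinate
mean-payoff-inf at least `1/N`, which is strictly positive. -/
theorem liminf_ge_one_div_card {V : Type*} [Fintype V]
    (E : V → V → Prop) (w₁ w₂ : V → V → ℤ)
    (W : ℕ) (hW : ∀ u v : V, E u v → |w₁ u v| ≤ (W : ℤ) ∧ |w₂ u v| ≤ (W : ℤ))
    (hcyc : ∀ (n : ℕ) (c : ℕ → V), 1 ≤ n → c n = c 0 →
      (∀ i < n, E (c i) (c (i + 1))) →
      (∀ i < n, ∀ j < n, c i = c j → i = j) →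
      0 ≤ ∑ i ∈ Finset.range n, w₁ (c i) (c (i + 1)) ∧
      1 ≤ ∑ i ∈ Finset.range n, w₂ (c i) (c (i + 1)))
    (ρ : ℕ → V) (hρ : ∀ k : ℕ, E (ρ k) (ρ (k + 1))) :
    (1 : ℝ) / (Fintype.card V) ≤
      Filter.atTop.liminf
        (fun k : ℕ => ((∑ i ∈ Finset.range k, w₂ (ρ i) (ρ (i + 1)) : ℤ) : ℝ) / k) ∧
    0 < (1 : ℝ) / (Fintype.card V) := by
  have hN : (0 : ℝ) < Fintype.card V := by exact_mod_cast Fintype.card_pos_iff.mpr ⟨ρ 0⟩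
  refine ⟨?_, by positivity⟩
  have hW₂ : ∀ u v, E u v → |w₂ u v| ≤ (W : ℤ) := fun u v h => (hW u v h).2
  have hcyc₂ : SimpleCyclesPositive E w₂ := fun n c h₁ h₂ h₃ h₄ => (hcyc n c h₁ h₂ h₃ h₄).2
  refine le_liminf_div_of_linear_bounds (s := fun k => (prefixWeight w₂ ρ k : ℝ))
    (A := Fintype.card V + Fintype.card V ^ 2 * W) (B := W) hN (fun k => ?_) (fun k => ?_)
  · have := card_mul_prefixWeight_ge hW₂ hcyc₂ k ρ hρ
    have : ((k - Fintype.card V - Fintype.card V ^ 2 * W : ℤ) : ℝ) ≤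
        ((Fintype.card V * prefixWeight w₂ ρ k : ℤ) : ℝ) := by exact_mod_cast this
    push_cast at this
    linarith
  · exact_mod_cast (abs_le.mp (abs_prefixWeight_le hW₂ hρ k)).2
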